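/- Let R be a unital non-associative ring, G a commutative monoid, π a G-derivation on R, and S = R[G;π] the Ore monoid ring. Then for every s ∈ S and all u,v ∈ S, the associator (s,u,v) lies in the additive subgroup of S generated by the products (s,r,t)·w with r,t ∈ R (embedded in S) and w ∈ S. In particular, if (s,r,t) = 0 for all r,t ∈ R, then s belongs to the left nucleus N_l(S). -/

import Mathlib

open scoped Classical

/-! Common framework: Ore monoid rings `R[G;π]` over a unital non-associative ring `R`
and a monoid `G`.  A `G`-derivation `π = {π^a_b}` is encoded as a map
`π : G → R → (G →₀ R)`, where `π a r b = π^a_b(r)`; axiom (D0) (finite support in `b`)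
is built into the `Finsupp` encoding.  The Ore monoid ring `S = R[G;π]` is the
additive group `G →₀ R` of finitely supported formal sums `Σ r_a xᵃ`
(with `Finsupp.single a r` representing `r xᵃ`), equipped with the
multiplication `GDeriv.mul` below. -/

/-- A two-sided ideal with respect to a (possibly non-associative, non-unital)
multiplication `m` on an additive group `A`. -/
structure IsIdealWith {A : Type*} [AddCommGroup A] (m : A → A → A) (J : Set A) : Prop where
  zero_mem : (0 : A) ∈ J
  add_mem : ∀ {x y : A}, x ∈ J → y ∈ J → x + y ∈ J
  neg_mem : ∀ {x : A}, x ∈ J → -x ∈ J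
  mul_mem_left : ∀ (r : A) {x : A}, x ∈ J → m r x ∈ J
  mul_mem_right : ∀ {x : A} (r : A), x ∈ J → m x r ∈ J

/-- The subset `F` of `A` is a field with respect to the multiplication `m` with
identity `one`: it is a commutative unital subring in which every nonzero element
has a multiplicative inverse. -/
def IsFieldWith {A : Type*} [AddCommGroup A] (m : A → A → A) (one : A) (F : Set A) : Prop :=
  one ∈ F ∧ (∀ x ∈ F, ∀ y ∈ F, x + y ∈ F) ∧ (∀ x ∈ F, -x ∈ F) ∧
  (∀ x ∈ F, ∀ y ∈ F, m x y ∈ F) ∧ (∀ x ∈ F, ∀ y ∈ F, m x y = m y x) ∧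
  (∀ x ∈ F, x ≠ 0 → ∃ y ∈ F, m x y = one ∧ m y x = one)

/-- A `G`-derivation on `R`: axioms (D0)–(D4).  Here `π a r b` denotes `π^a_b(r)`,
and (D0) holds by the finite support of `π a r : G →₀ R`. -/
structure GDeriv (R : Type*) [NonAssocRing R] (G : Type*) [Monoid G] where
  /-- the family of maps; `π a r b = π^a_b(r)` -/
  π : G → R → (G →₀ R)
  /-- (D1): `π^e_e = id` and `π^e_a = 0` for `a ≠ e` -/
  d1 : ∀ r : R, π 1 r = Finsupp.single 1 r
  /-- (D2): `π^a_b(1) = δ_{a,b}` -/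
  d2 : ∀ a : G, π a (1 : R) = Finsupp.single a (1 : R)
  /-- (D3): each `π^a_b` is additive -/
  d3 : ∀ (a : G) (r s : R), π a (r + s) = π a r + π a s
  /-- (D4): `π^{ab}_c = Σ_{df = c} π^a_d ∘ π^b_f` -/
  d4 : ∀ (a b : G) (r : R),
    π (a * b) r = (π b r).sum fun f s => (π a s).sum fun d t => Finsupp.single (d * f) t

namespace GDeriv

variable {R : Type*} [NonAssocRing R] {G : Type*} [Monoid G] (P : GDeriv R G)

/-- The multiplication of the Ore monoid ring `S = R[G;π]` on `G →₀ R`: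
the biadditive extension of `(r xᵃ)(s xᵇ) = Σ_c r π^a_c(s) x^{cb}`. -/
noncomputable def mul (u v : G →₀ R) : G →₀ R :=
  u.sum fun a r => v.sum fun b s => (P.π a s).sum fun c t => Finsupp.single (c * b) (r * t)

/-- The multiplicative identity `1·xᵉ` of `S`. -/
noncomputable def one (_P : GDeriv R G) : G →₀ R := Finsupp.single 1 1

/-- `R^G = {r ∈ R : π^a_b(r) = δ_{a,b} r}`. -/
def fixed : Set R := {r | ∀ a : G, P.π a r = Finsupp.single a r}

/-- `S^G = Σ_a R^G xᵃ`, the elements of `S` all of whose coefficients lie in `R^G`. -/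
def fixedS : Set (G →₀ R) := {u | ∀ c : G, u c ∈ P.fixed}

/-- (D7): every `π^a_b` is left `R^G`-linear. -/
def LeftLinear : Prop := ∀ a b : G, ∀ s ∈ P.fixed, ∀ r : R, P.π a (s * r) b = s * P.π a r b

/-- (D8): every `π^a_b` is right `R^G`-linear. -/
def RightLinear : Prop := ∀ a b : G, ∀ r : R, ∀ s ∈ P.fixed, P.π a (r * s) b = P.π a r b * s

/-- `π` is strong if (D7) or (D8) holds. -/
def Strong : Prop := P.LeftLinear ∨ P.RightLinear

/-- (D6): `π^a_a = id_R` for all `a ∈ G` (i.e. `π` is unital). -/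
def Unital : Prop := ∀ (a : G) (r : R), P.π a r a = r

/-- `π` is commutative: `π^a_b ∘ π^c_d = π^c_d ∘ π^a_b`. -/
def Commutes : Prop := ∀ (a b c d : G) (r : R), P.π a (P.π c r d) b = P.π c (P.π a r b) d

/-- `π` is well-ordered: there is a well-order on `G` whose strict part `lt`
satisfies `π^a_b = 0` whenever `a ≺ b`. -/
def WellOrdered : Prop :=
  ∃ lt : G → G → Prop, IsWellOrder G lt ∧ ∀ a b : G, lt a b → ∀ r : R, P.π a r b = 0

/-- The extension `π̃^a_b : S → S`, `π̃^a_b(Σ_c r_c x^c) = Σ_c π^a_b(r_c) x^c`. -/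
noncomputable def ext (a b : G) (u : G →₀ R) : G →₀ R := u.sum fun c r => Finsupp.single c (P.π a r b)

/-- The commutator `[u,v] = uv - vu` in `S`. -/
noncomputable def commS (u v : G →₀ R) : G →₀ R := P.mul u v - P.mul v u

/-- The associator `(u,v,w) = (uv)w - u(vw)` in `S`. -/
noncomputable def assocS (u v w : G →₀ R) : G →₀ R := P.mul (P.mul u v) w - P.mul u (P.mul v w)

/-- The left nucleus `N_l(S)`. -/
def Nl : Set (G →₀ R) := {u | ∀ v w, P.assocS u v w = 0}

/-- The middle nucleus `N_m(S)`. -/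
def Nm : Set (G →₀ R) := {u | ∀ v w, P.assocS v u w = 0}

/-- The right nucleus `N_r(S)`. -/
def Nr : Set (G →₀ R) := {u | ∀ v w, P.assocS v w u = 0}

/-- The commuter `C(S)`. -/
def CS : Set (G →₀ R) := {u | ∀ v, P.mul u v = P.mul v u}

/-- The center `Z(S) = C(S) ∩ N_l(S) ∩ N_m(S) ∩ N_r(S)`. -/
def Z : Set (G →₀ R) := P.CS ∩ (P.Nl ∩ P.Nm ∩ P.Nr)

/-- `Z(S)^G = {s ∈ Z(S) : π̃^a_b(s) = δ_{a,b} s}`. -/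
def ZG : Set (G →₀ R) :=
  {s | s ∈ P.Z ∧ ∀ a b : G, P.ext a b s = if a = b then s else 0}

/-- `R` is `G`-simple: `{0}` and `R` are the only `G`-invariant ideals of `R`. -/
def RSimple : Prop :=
  ∀ J : Set R, IsIdealWith (· * ·) J → (∀ a b : G, ∀ r ∈ J, P.π a r b ∈ J) →
    J = {0} ∨ J = Set.univ

/-- `S` is `G`-simple: `{0}` and `S` are the only ideals of `S` invariant under all `π̃^a_b`. -/
def SSimple : Prop :=
  ∀ J : Set (G →₀ R), IsIdealWith P.mul J → (∀ a b : G, ∀ u ∈ J, P.ext a b u ∈ J) →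
    J = {0} ∨ J = Set.univ

end GDeriv

/-! The monomials `xᵇ = 1·xᵇ` associate with everything on the right and in the middle:
`(uv)xᵇ = u(vxᵇ)` because `π^a_c(1) = δ_{a,c}` (D2), and `(uxᵇ)v = u(xᵇv)` by (D4).
Hence `(s, u, wxᶜ) = (s, u, w)xᶜ` and `(s, uxᵇ, v) = (s, u, xᵇv)`. Writing `rxᵇ = r·xᵇ`
and `xᵇt = Σ_d π^b_d(t) xᵈ` gives
`(s, rxᵇ, txᶜ) = Σ_d (s, r, π^b_d(t)) x^{dc}`,
and biadditivity of the associator in its last two arguments does the rest. -/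

open Finsupp

namespace GDeriv

variable {R : Type*} [NonAssocRing R] {G : Type*} [Monoid G] (P : GDeriv R G)

@[simp]
lemma π_zero (a : G) : P.π a 0 = 0 := by
  simpa using P.d3 a 0 0

noncomputable def shiftMul (r : R) (c : G) : (G →₀ R) →+ (G →₀ R) :=
  liftAddHom fun g => (singleAddHom (g * c)).comp (AddMonoidHom.mulLeft r)

lemma shiftMul_apply (r : R) (c : G) (w : G →₀ R) :
    shiftMul r c w = w.sum fun g t => single (g * c) (r * t) :=
  liftAddHom_apply _ _

@[simp]
lemma shiftMul_single (r : R) (c g : G) (t : R) :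
    shiftMul r c (single g t) = single (g * c) (r * t) := by
  simp [shiftMul_apply]

@[simp]
lemma shiftMul_zero_left (c : G) (w : G →₀ R) : shiftMul 0 c w = 0 := by
  simp [shiftMul_apply]

lemma shiftMul_add_left (r r' : R) (c : G) (w : G →₀ R) :
    shiftMul (r + r') c w = shiftMul r c w + shiftMul r' c w := by
  simp [shiftMul_apply, add_mul, single_add, sum_add]

lemma mul_def (u v : G →₀ R) :
    P.mul u v = u.sum fun a r => v.sum fun b s => shiftMul r b (P.π a s) := by
  simp only [shiftMul_apply]; rfl

lemma single_mul_single (a : G) (r : R) (b : G) (s : R) :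
    P.mul (single a r) (single b s) = shiftMul r b (P.π a s) := by
  rw [mul_def, sum_single_index, sum_single_index] <;> simp

@[simp]
lemma zero_mul (v : G →₀ R) : P.mul 0 v = 0 := sum_zero_index

@[simp]
lemma mul_zero (u : G →₀ R) : P.mul u 0 = 0 := by simp [mul_def]

lemma add_mul (u u' v : G →₀ R) : P.mul (u + u') v = P.mul u v + P.mul u' v := by
  simp only [mul_def]
  rw [sum_add_index']
  · simp
  · intro a r r'; simp [shiftMul_add_left, sum_add]

lemma mul_add (u v v' : G →₀ R) : P.mul u (v + v') = P.mul u v + P.mul u v' := by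
  simp only [mul_def, ← sum_add]
  refine sum_congr fun a _ => ?_
  rw [sum_add_index']
  · simp
  · intro b s s'; simp [P.d3]

lemma sub_mul (u u' v : G →₀ R) : P.mul (u - u') v = P.mul u v - P.mul u' v := by
  rw [eq_sub_iff_add_eq, ← add_mul, sub_add_cancel]

noncomputable def mulLeft (u : G →₀ R) : (G →₀ R) →+ (G →₀ R) :=
  AddMonoidHom.mk' (P.mul u) (P.mul_add u)

noncomputable def mulRight (v : G →₀ R) : (G →₀ R) →+ (G →₀ R) :=
  AddMonoidHom.mk' (P.mul · v) (P.add_mul · · v)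

lemma single_mul_single_one (a : G) (r : R) (b : G) :
    P.mul (single a r) (single b 1) = single (a * b) r := by
  simp [single_mul_single, P.d2]

lemma mul_single_one (u : G →₀ R) (b : G) :
    P.mul u (single b 1) = mapDomain (· * b) u := by
  induction u using induction_linear with
  | zero => simp
  | add u u' hu hu' => rw [add_mul, hu, hu', mapDomain_add]
  | single a r => rw [single_mul_single_one, mapDomain_single]

lemma mapDomain_shiftMul (b : G) (r : R) (c : G) (w : G →₀ R) :
    mapDomain (· * b) (shiftMul r c w) = shiftMul r (c * b) w := by
  induction w using induction_linear with
  | zero => simp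
  | add w w' hw hw' => rw [map_add, mapDomain_add, hw, hw', map_add]
  | single g t => rw [shiftMul_single, shiftMul_single, mapDomain_single, mul_assoc]

lemma shiftMul_mapDomain (r : R) (c f : G) (w : G →₀ R) :
    shiftMul r c (mapDomain (· * f) w) = shiftMul r (f * c) w := by
  induction w using induction_linear with
  | zero => simp
  | add w w' hw hw' => rw [mapDomain_add, map_add, hw, hw', map_add]
  | single g t => rw [mapDomain_single, shiftMul_single, shiftMul_single, mul_assoc]

lemma single_one_mul_single (b c : G) (s : R) :
    P.mul (single b 1) (single c s) = mapDomain (· * c) (P.π b s) := by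
  rw [single_mul_single, shiftMul_apply]
  simp only [one_mul]; rfl

lemma single_eq_mul_single_one (b : G) (r : R) :
    single b r = P.mul (single 1 r) (single b 1) := by
  rw [single_mul_single_one, one_mul]

lemma π_mul_eq_sum_mapDomain (a b : G) (s : R) :
    P.π (a * b) s = (P.π b s).sum fun f t => mapDomain (· * f) (P.π a t) :=
  P.d4 a b s

lemma mul_mul_single_one (u v : G →₀ R) (b : G) :
    P.mul (P.mul u v) (single b 1) = P.mul u (P.mul v (single b 1)) := by
  simp only [mul_single_one]
  induction u using induction_linear with
  | zero => simp
  | add u u' hu hu' => rw [add_mul, mapDomain_add, hu, hu', add_mul]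
  | single a r =>
    induction v using induction_linear with
    | zero => simp
    | add v v' hv hv' => rw [mul_add, mapDomain_add, hv, hv', mapDomain_add, mul_add]
    | single c s => rw [mapDomain_single, single_mul_single, single_mul_single, mapDomain_shiftMul]

lemma mul_single_one_mul (u : G →₀ R) (b : G) (v : G →₀ R) :
    P.mul (P.mul u (single b 1)) v = P.mul u (P.mul (single b 1) v) := by
  induction u using induction_linear with
  | zero => simp
  | add u u' hu hu' => rw [add_mul, add_mul, hu, hu', add_mul]
  | single a r =>
    induction v using induction_linear with
    | zero => simp
    | add v v' hv hv' => rw [mul_add, hv, hv', mul_add, mul_add]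
    | single c s =>
      rw [single_mul_single_one, single_mul_single, single_one_mul_single,
        π_mul_eq_sum_mapDomain, map_finsuppSum]
      simp only [shiftMul_mapDomain]
      change _ = P.mulLeft (single a r) ((P.π b s).sum fun f t => single (f * c) t)
      rw [map_finsuppSum]
      exact sum_congr fun f _ => (P.single_mul_single a r _ _).symm

lemma assocS_add_right (s u v v' : G →₀ R) :
    P.assocS s u (v + v') = P.assocS s u v + P.assocS s u v' := by
  simp only [assocS, mul_add]
  abel

lemma assocS_add_middle (s u u' v : G →₀ R) :
    P.assocS s (u + u') v = P.assocS s u v + P.assocS s u' v := by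
  simp only [assocS, mul_add, add_mul]
  abel

@[simp]
lemma assocS_zero_right (s u : G →₀ R) : P.assocS s u 0 = 0 := by
  simp [assocS]

@[simp]
lemma assocS_zero_middle (s v : G →₀ R) : P.assocS s 0 v = 0 := by
  simp [assocS]

noncomputable def assocSRight (s u : G →₀ R) : (G →₀ R) →+ (G →₀ R) :=
  AddMonoidHom.mk' (P.assocS s u) (P.assocS_add_right s u)

lemma assocS_mul_single_one (s u w : G →₀ R) (c : G) :
    P.assocS s u (P.mul w (single c 1)) = P.mul (P.assocS s u w) (single c 1) := by
  simp only [assocS, sub_mul, mul_mul_single_one]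

lemma assocS_mul_single_one_middle (s u v : G →₀ R) (b : G) :
    P.assocS s (P.mul u (single b 1)) v = P.assocS s u (P.mul (single b 1) v) := by
  simp only [assocS, ← mul_mul_single_one, mul_single_one_mul]

lemma assocS_single_single (s : G →₀ R) (b : G) (r : R) (c : G) (t : R) :
    P.assocS s (single b r) (single c t) =
      (P.π b t).sum fun d t' =>
        P.mul (P.assocS s (single 1 r) (single 1 t')) (single (d * c) 1) := by
  have hπ : P.mul (single b 1) (single 1 t) = (P.π b t).sum single := by
    simp only [single_one_mul_single, mul_one, sum_single]
    exact mapDomain_id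
  rw [P.single_eq_mul_single_one c t, assocS_mul_single_one, P.single_eq_mul_single_one b r,
    assocS_mul_single_one_middle, hπ]
  change P.mulRight (single c 1) (P.assocSRight s (single 1 r) ((P.π b t).sum single)) = _
  rw [map_finsuppSum, map_finsuppSum]
  refine sum_congr fun d _ => ?_
  change P.mul (P.assocS s (single 1 r) (single d _)) (single c 1) = _
  rw [P.single_eq_mul_single_one d, assocS_mul_single_one, mul_mul_single_one,
    single_mul_single_one]

noncomputable def assocSpan (s : G →₀ R) : AddSubgroup (G →₀ R) :=
  AddSubgroup.closure
    {z | ∃ (r t : R) (w : G →₀ R), z = P.mul (P.assocS s (single 1 r) (single 1 t)) w}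

lemma assocS_mem_assocSpan (s u v : G →₀ R) : P.assocS s u v ∈ P.assocSpan s := by
  induction u using induction_linear with
  | zero => simp
  | add u u' hu hu' => rw [assocS_add_middle]; exact add_mem hu hu'
  | single b r =>
    induction v using induction_linear with
    | zero => simp
    | add v v' hv hv' => rw [assocS_add_right]; exact add_mem hv hv'
    | single c t =>
      rw [assocS_single_single]
      exact sum_mem fun d _ => AddSubgroup.subset_closure ⟨r, _, _, rfl⟩

lemma assocSpan_eq_bot {s : G →₀ R}
    (h : ∀ r t : R, P.assocS s (single 1 r) (single 1 t) = 0) : P.assocSpan s = ⊥ := by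
  rw [eq_bot_iff, assocSpan, AddSubgroup.closure_le]
  rintro _ ⟨r, t, w, rfl⟩
  simp [h]

end GDeriv

/-- If `G` is commutative then for every `s ∈ S` and all `u,v ∈ S`,
the associator `(s,u,v)` lies in the additive subgroup of `S` generated by the
products `(s,r,t)·w` with `r,t ∈ R` (embedded in `S`) and `w ∈ S`.  In particular,
if `(s,r,t) = 0` for all `r,t ∈ R`, then `s ∈ N_l(S)`. -/
theorem stmt5 {R : Type*} [NonAssocRing R] {G : Type*} [CommMonoid G]
    (P : GDeriv R G) (s : G →₀ R) :
    (∀ u v : G →₀ R, P.assocS s u v ∈ AddSubgroup.closure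
      {z : G →₀ R | ∃ (r t : R) (w : G →₀ R),
        z = P.mul (P.assocS s (Finsupp.single 1 r) (Finsupp.single 1 t)) w}) ∧
    ((∀ r t : R, P.assocS s (Finsupp.single 1 r) (Finsupp.single 1 t) = 0) →
      s ∈ P.Nl) :=
  ⟨P.assocS_mem_assocSpan s, fun h u v => by
    simpa [P.assocSpan_eq_bot h] using P.assocS_mem_assocSpan s u v⟩
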